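/- Under the listed assumptions, the medial commutativity arrow is definable from associativity and commutativity: for all objects A, B, C, D of 𝒜, c^m_{A,B,C,D} = b→_{A,C,B∧D} ∘ (1_A ∧ (b←_{C,B,D} ∘ (c_{B,C} ∧ 1_D) ∘ b→_{B,C,D})) ∘ b←_{A,B,C∧D}. -/
import Mathlib


open CategoryTheory

universe v u

/-- The data and assumptions of Section 2 of "Medial Commutativity":
a category `C` with a bifunctor `wedge`, a special object `top`,
medial commutativity arrows `cm` (natural in all four indices),
natural isomorphisms `δ` and `σ` with the unit object, and the equations
(ψc^m), (ψδ), (ψσ), (c^mc^m) and (VII). -/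
structure MedialData (C : Type u) [Category.{v} C] where
  /-- the bifunctor `∧` on objects -/
  wedge : C → C → C
  /-- the bifunctor `∧` on arrows -/
  whom : ∀ {A B X Y : C}, (A ⟶ B) → (X ⟶ Y) → (wedge A X ⟶ wedge B Y)
  /-- (bif 1) -/
  whom_id : ∀ (A B : C), whom (𝟙 A) (𝟙 B) = 𝟙 (wedge A B)
  /-- (bif 2) -/
  whom_comp : ∀ {A B B' X Y Y' : C} (f : A ⟶ B) (g : B ⟶ B') (h : X ⟶ Y) (k : Y ⟶ Y'),
      whom (f ≫ g) (h ≫ k) = whom f h ≫ whom g k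
  /-- the special object `⊤` -/
  top : C
  /-- medial commutativity `c^m_{A,B,X,Y} : (A∧B)∧(X∧Y) ⟶ (A∧X)∧(B∧Y)` -/
  cm : ∀ (A B X Y : C), wedge (wedge A B) (wedge X Y) ⟶ wedge (wedge A X) (wedge B Y)
  /-- (c^m nat) -/
  cm_natural : ∀ {A A' B B' X X' Y Y' : C}
      (f : A ⟶ A') (g : B ⟶ B') (h : X ⟶ X') (j : Y ⟶ Y'),
      cm A B X Y ≫ whom (whom f h) (whom g j) = whom (whom f g) (whom h j) ≫ cm A' B' X' Y'
  /-- `δ→_A : A∧⊤ ⟶ A` -/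
  δto : ∀ (A : C), wedge A top ⟶ A
  /-- `δ←_A : A ⟶ A∧⊤` -/
  δfrom : ∀ (A : C), A ⟶ wedge A top
  /-- naturality of `δ→` -/
  δto_natural : ∀ {A B : C} (f : A ⟶ B), whom f (𝟙 top) ≫ δto B = δto A ≫ f
  δto_δfrom : ∀ (A : C), δto A ≫ δfrom A = 𝟙 (wedge A top)
  δfrom_δto : ∀ (A : C), δfrom A ≫ δto A = 𝟙 A
  /-- `σ→_A : ⊤∧A ⟶ A` -/
  σto : ∀ (A : C), wedge top A ⟶ A
  /-- `σ←_A : A ⟶ ⊤∧A` -/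
  σfrom : ∀ (A : C), A ⟶ wedge top A
  /-- naturality of `σ→` -/
  σto_natural : ∀ {A B : C} (f : A ⟶ B), whom (𝟙 top) f ≫ σto B = σto A ≫ f
  σto_σfrom : ∀ (A : C), σto A ≫ σfrom A = 𝟙 (wedge top A)
  σfrom_σto : ∀ (A : C), σfrom A ≫ σto A = 𝟙 A
  /-- (ψc^m) -/
  psi_cm : ∀ (A₁ A₁' A₂ A₂' A₃ A₃' A₄ A₄' : C),
      cm (wedge A₁ A₁') (wedge A₂ A₂') (wedge A₃ A₃') (wedge A₄ A₄') ≫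
        whom (cm A₁ A₁' A₃ A₃') (cm A₂ A₂' A₄ A₄') ≫
        cm (wedge A₁ A₃) (wedge A₁' A₃') (wedge A₂ A₄) (wedge A₂' A₄')
      =
      whom (cm A₁ A₁' A₂ A₂') (cm A₃ A₃' A₄ A₄') ≫
        cm (wedge A₁ A₂) (wedge A₁' A₂') (wedge A₃ A₄) (wedge A₃' A₄') ≫
        whom (cm A₁ A₂ A₃ A₄) (cm A₁' A₂' A₃' A₄')
  /-- (ψδ) -/
  psi_δ : ∀ (A A' : C),
      δto (wedge A A') =
        whom (𝟙 (wedge A A')) (δfrom top) ≫ cm A A' top top ≫ whom (δto A) (δto A')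
  /-- (ψσ) -/
  psi_σ : ∀ (A A' : C),
      σto (wedge A A') =
        whom (δfrom top) (𝟙 (wedge A A')) ≫ cm top top A A' ≫ whom (σto A) (σto A')
  /-- (c^mc^m) -/
  cm_cm : ∀ (A B X Y : C), cm A B X Y ≫ cm A X B Y = 𝟙 (wedge (wedge A B) (wedge X Y))
  /-- (VII) -/
  δtop_eq_σtop : δto top = σto top

variable {C : Type u} [Category.{v} C]

/-- the associativity arrow `b→_{A,B,X} : A∧(B∧X) ⟶ (A∧B)∧X`. -/
def MedialData.bto (M : MedialData C) (A B X : C) :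
    M.wedge A (M.wedge B X) ⟶ M.wedge (M.wedge A B) X :=
  M.whom (M.δfrom A) (𝟙 (M.wedge B X)) ≫ M.cm A M.top B X ≫
    M.whom (𝟙 (M.wedge A B)) (M.σto X)

/-- the associativity arrow `b←_{A,B,X} : (A∧B)∧X ⟶ A∧(B∧X)`. -/
def MedialData.bfrom (M : MedialData C) (A B X : C) :
    M.wedge (M.wedge A B) X ⟶ M.wedge A (M.wedge B X) :=
  M.whom (𝟙 (M.wedge A B)) (M.σfrom X) ≫ M.cm A B M.top X ≫
    M.whom (M.δto A) (𝟙 (M.wedge B X))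

/-- the commutativity arrow `c_{A,B} : A∧B ⟶ B∧A`. -/
def MedialData.cc (M : MedialData C) (A B : C) : M.wedge A B ⟶ M.wedge B A :=
  M.whom (M.σfrom A) (M.δfrom B) ≫ M.cm M.top A B M.top ≫ M.whom (M.σto B) (M.δto A)

namespace MedialData

section Lemmas

variable {C : Type u} [Category.{v} C] (M : MedialData C)

lemma mer {A B B' X Y Y' : C} (f : A ⟶ B) (g : B ⟶ B') (h : X ⟶ Y) (k : Y ⟶ Y') :
    M.whom f h ≫ M.whom g k = M.whom (f ≫ g) (h ≫ k) := (M.whom_comp f g h k).symm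


lemma mer' {A B B' X Y Y' Z : C} (f : A ⟶ B) (g : B ⟶ B') (h : X ⟶ Y) (k : Y ⟶ Y')
    (x : M.wedge B' Y' ⟶ Z) :
    M.whom f h ≫ M.whom g k ≫ x = M.whom (f ≫ g) (h ≫ k) ≫ x := by
  rw [← Category.assoc, M.mer]

lemma δfrom_natural {A B : C} (f : A ⟶ B) :
    f ≫ M.δfrom B = M.δfrom A ≫ M.whom f (𝟙 M.top) := by
  have h := M.δto_natural f
  calc f ≫ M.δfrom B = M.δfrom A ≫ ((M.δto A ≫ f) ≫ M.δfrom B) := by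
        rw [← Category.assoc, ← Category.assoc, M.δfrom_δto, Category.id_comp]
    _ = M.δfrom A ≫ M.whom f (𝟙 M.top) ≫ (M.δto B ≫ M.δfrom B) := by
        rw [← h, Category.assoc]
    _ = M.δfrom A ≫ M.whom f (𝟙 M.top) := by rw [M.δto_δfrom, Category.comp_id]

lemma σfrom_natural {A B : C} (f : A ⟶ B) :
    f ≫ M.σfrom B = M.σfrom A ≫ M.whom (𝟙 M.top) f := by
  have h := M.σto_natural f
  calc f ≫ M.σfrom B = M.σfrom A ≫ ((M.σto A ≫ f) ≫ M.σfrom B) := by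
        rw [← Category.assoc, ← Category.assoc, M.σfrom_σto, Category.id_comp]
    _ = M.σfrom A ≫ M.whom (𝟙 M.top) f ≫ (M.σto B ≫ M.σfrom B) := by
        rw [← h, Category.assoc]
    _ = M.σfrom A ≫ M.whom (𝟙 M.top) f := by rw [M.σto_σfrom, Category.comp_id]

/-- `δ→_{A∧⊤} = δ→_A ∧ 1`. -/
lemma δto_wedge_top (A : C) :
    M.δto (M.wedge A M.top) = M.whom (M.δto A) (𝟙 M.top) := by
  have h := M.δto_natural (M.δto A)
  calc M.δto (M.wedge A M.top)
      = (M.δto (M.wedge A M.top) ≫ M.δto A) ≫ M.δfrom A := by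
        rw [Category.assoc, M.δto_δfrom, Category.comp_id]
    _ = M.whom (M.δto A) (𝟙 M.top) ≫ (M.δto A ≫ M.δfrom A) := by
        rw [← h, Category.assoc]
    _ = M.whom (M.δto A) (𝟙 M.top) := by rw [M.δto_δfrom, Category.comp_id]

/-- `σ→_{⊤∧A} = 1 ∧ σ→_A`. -/
lemma σto_top_wedge (A : C) :
    M.σto (M.wedge M.top A) = M.whom (𝟙 M.top) (M.σto A) := by
  have h := M.σto_natural (M.σto A)
  calc M.σto (M.wedge M.top A)
      = (M.σto (M.wedge M.top A) ≫ M.σto A) ≫ M.σfrom A := by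
        rw [Category.assoc, M.σto_σfrom, Category.comp_id]
    _ = M.whom (𝟙 M.top) (M.σto A) ≫ (M.σto A ≫ M.σfrom A) := by
        rw [← h, Category.assoc]
    _ = M.whom (𝟙 M.top) (M.σto A) := by rw [M.σto_σfrom, Category.comp_id]

lemma δfrom_top_eq_σfrom_top : M.δfrom M.top = M.σfrom M.top := by
  calc M.δfrom M.top = (M.σfrom M.top ≫ M.σto M.top) ≫ M.δfrom M.top := by
        rw [M.σfrom_σto, Category.id_comp]
    _ = M.σfrom M.top ≫ (M.δto M.top ≫ M.δfrom M.top) := by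
        rw [M.δtop_eq_σtop, Category.assoc]
    _ = M.σfrom M.top := by rw [M.δto_δfrom, Category.comp_id]


lemma δfrom_δto' {A Z : C} (x : A ⟶ Z) : M.δfrom A ≫ M.δto A ≫ x = x := by
  rw [← Category.assoc, M.δfrom_δto, Category.id_comp]

lemma δto_δfrom' {A : C} {Z : C} (x : M.wedge A M.top ⟶ Z) :
    M.δto A ≫ M.δfrom A ≫ x = x := by
  rw [← Category.assoc, M.δto_δfrom, Category.id_comp]

lemma σfrom_σto' {A Z : C} (x : A ⟶ Z) : M.σfrom A ≫ M.σto A ≫ x = x := by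
  rw [← Category.assoc, M.σfrom_σto, Category.id_comp]

lemma σto_σfrom' {A : C} {Z : C} (x : M.wedge M.top A ⟶ Z) :
    M.σto A ≫ M.σfrom A ≫ x = x := by
  rw [← Category.assoc, M.σto_σfrom, Category.id_comp]

end Lemmas

end MedialData
namespace MedialData

section Lemmas2

variable {C : Type u} [Category.{v} C] (M : MedialData C)

/-- (F1) `c^m_{⊤,⊤,P,Q}` expressed by units. -/
lemma cm_TT (P Q : C) :
    M.cm M.top M.top P Q =
      M.whom (M.δto M.top) (𝟙 (M.wedge P Q)) ≫ M.σto (M.wedge P Q) ≫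
        M.whom (M.σfrom P) (M.σfrom Q) := by
  rw [M.psi_σ P Q]
  simp only [Category.assoc, M.mer, M.mer', Category.comp_id, Category.id_comp,
    M.δto_δfrom, M.σto_σfrom, M.whom_id]

/-- (F4) `c^m_{⊤,P,⊤,Q}` expressed by units. -/
lemma cm_TMT (P Q : C) :
    M.cm M.top P M.top Q =
      M.whom (M.σto P) (M.σto Q) ≫ M.σfrom (M.wedge P Q) ≫
        M.whom (M.δfrom M.top) (𝟙 (M.wedge P Q)) := by
  have hinv :
      (M.whom (M.σto P) (M.σto Q) ≫ M.σfrom (M.wedge P Q) ≫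
        M.whom (M.δfrom M.top) (𝟙 (M.wedge P Q))) ≫ M.cm M.top M.top P Q =
      𝟙 (M.wedge (M.wedge M.top P) (M.wedge M.top Q)) := by
    rw [M.cm_TT P Q]
    simp only [Category.assoc, M.mer, M.mer', Category.comp_id, Category.id_comp,
      M.δfrom_δto, M.whom_id, M.σto_σfrom, M.σfrom_σto]
    rw [← Category.assoc (M.σfrom _) (M.σto _), M.σfrom_σto, Category.id_comp,
      M.mer, M.σto_σfrom, M.σto_σfrom, M.whom_id]
  calc M.cm M.top P M.top Q
      = ((M.whom (M.σto P) (M.σto Q) ≫ M.σfrom (M.wedge P Q) ≫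
          M.whom (M.δfrom M.top) (𝟙 (M.wedge P Q))) ≫ M.cm M.top M.top P Q) ≫
          M.cm M.top P M.top Q := by rw [hinv, Category.id_comp]
    _ = _ := by
        simp only [Category.assoc, M.cm_cm, Category.comp_id]

end Lemmas2

end MedialData
namespace MedialData

section Lemmas3

variable {C : Type u} [Category.{v} C] (M : MedialData C)

lemma cm_TTTA (A : C) :
    M.cm M.top M.top M.top A = 𝟙 (M.wedge (M.wedge M.top M.top) (M.wedge M.top A)) := by
  rw [M.cm_TT M.top A, M.σto_top_wedge]
  simp only [Category.assoc, M.mer, M.mer', Category.comp_id, Category.id_comp,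
    M.σto_σfrom]
  rw [M.δtop_eq_σtop, M.σto_σfrom, M.whom_id]

lemma cm_ATTT (A : C) :
    M.cm A M.top M.top M.top = 𝟙 (M.wedge (M.wedge A M.top) (M.wedge M.top M.top)) := by
  have h := M.psi_δ A M.top
  have : M.cm A M.top M.top M.top =
      M.whom (𝟙 (M.wedge A M.top)) (M.δto M.top) ≫ M.δto (M.wedge A M.top) ≫
        M.whom (M.δfrom A) (M.δfrom M.top) := by
    rw [h]
    simp only [Category.assoc, M.mer, M.mer', Category.comp_id, Category.id_comp,
      M.δto_δfrom, M.whom_id]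
  rw [this, M.δto_wedge_top]
  simp only [Category.assoc, M.mer, M.mer', Category.comp_id, Category.id_comp,
    M.δto_δfrom, M.whom_id]

lemma cm_Gid (A B : C) :
    M.cm A M.top M.top B = 𝟙 (M.wedge (M.wedge A M.top) (M.wedge M.top B)) := by
  -- the padded arrow `T` is an idempotent isomorphism, hence the identity
  have hψ := M.psi_cm A M.top M.top M.top M.top M.top M.top B
  rw [M.cm_ATTT, M.cm_TTTA, M.whom_id] at hψ
  simp only [Category.id_comp, Category.comp_id] at hψ
  -- hψ : T ≫ T = T ; and T ≫ T = 𝟙 by (c^mc^m)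
  have hT := M.cm_cm (M.wedge A M.top) (M.wedge M.top M.top) (M.wedge M.top M.top)
      (M.wedge M.top B)
  have hT1 : M.cm (M.wedge A M.top) (M.wedge M.top M.top) (M.wedge M.top M.top)
      (M.wedge M.top B) = 𝟙 _ := by rw [← hψ, hT]
  -- transfer along naturality
  have hn := M.cm_natural (M.δfrom A) (M.δfrom M.top) (M.δfrom M.top) (M.σfrom B)
  rw [hT1, Category.comp_id] at hn
  have hW : M.whom (M.whom (M.δfrom A) (M.δfrom M.top)) (M.whom (M.δfrom M.top) (M.σfrom B)) ≫
      M.whom (M.whom (M.δto A) (M.δto M.top)) (M.whom (M.δto M.top) (M.σto B)) =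
      𝟙 (M.wedge (M.wedge A M.top) (M.wedge M.top B)) := by
    simp only [M.mer, M.δfrom_δto, M.σfrom_σto, M.whom_id]
  calc M.cm A M.top M.top B
      = M.cm A M.top M.top B ≫
          (M.whom (M.whom (M.δfrom A) (M.δfrom M.top)) (M.whom (M.δfrom M.top) (M.σfrom B)) ≫
           M.whom (M.whom (M.δto A) (M.δto M.top)) (M.whom (M.δto M.top) (M.σto B))) := by
        rw [hW, Category.comp_id]
    _ = (M.cm A M.top M.top B ≫
          M.whom (M.whom (M.δfrom A) (M.δfrom M.top)) (M.whom (M.δfrom M.top) (M.σfrom B))) ≫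
          M.whom (M.whom (M.δto A) (M.δto M.top)) (M.whom (M.δto M.top) (M.σto B)) := by
        rw [Category.assoc]
    _ = 𝟙 _ := by rw [hn, hW]


lemma δfrom_σto_top : M.δfrom M.top ≫ M.σto M.top = 𝟙 M.top := by
  rw [← M.δtop_eq_σtop, M.δfrom_δto]

lemma σfrom_δto_top : M.σfrom M.top ≫ M.δto M.top = 𝟙 M.top := by
  rw [M.δtop_eq_σtop, M.σfrom_σto]

lemma δfrom_σto_top' {Z : C} (x : M.top ⟶ Z) :
    M.δfrom M.top ≫ M.σto M.top ≫ x = x := by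
  rw [← Category.assoc, M.δfrom_σto_top, Category.id_comp]

lemma σfrom_δto_top' {Z : C} (x : M.top ⟶ Z) :
    M.σfrom M.top ≫ M.δto M.top ≫ x = x := by
  rw [← Category.assoc, M.σfrom_δto_top, Category.id_comp]

lemma σfrom_natural' {A B Z : C} (f : A ⟶ B) (x : M.wedge M.top B ⟶ Z) :
    M.σfrom A ≫ M.whom (𝟙 M.top) f ≫ x = f ≫ M.σfrom B ≫ x := by
  rw [← Category.assoc, ← M.σfrom_natural, Category.assoc]

lemma δfrom_natural' {A B Z : C} (f : A ⟶ B) (x : M.wedge B M.top ⟶ Z) :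
    M.δfrom A ≫ M.whom f (𝟙 M.top) ≫ x = f ≫ M.δfrom B ≫ x := by
  rw [← Category.assoc, ← M.δfrom_natural, Category.assoc]

lemma σto_natural' {A B Z : C} (f : A ⟶ B) (x : B ⟶ Z) :
    M.whom (𝟙 M.top) f ≫ M.σto B ≫ x = M.σto A ≫ f ≫ x := by
  rw [← Category.assoc, M.σto_natural, Category.assoc]

lemma δto_natural' {A B Z : C} (f : A ⟶ B) (x : B ⟶ Z) :
    M.whom f (𝟙 M.top) ≫ M.δto B ≫ x = M.δto A ≫ f ≫ x := by
  rw [← Category.assoc, M.δto_natural, Category.assoc]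

end Lemmas3

end MedialData
namespace MedialData

section Lemmas4

variable {C : Type u} [Category.{v} C] (M : MedialData C)

/-- conjugating `c^m` by pads in all four arguments -/
lemma cm_pad {A A' B B' X X' Y Y' : C}
    (f : A ⟶ A') (f' : A' ⟶ A) (g : B ⟶ B') (g' : B' ⟶ B)
    (h : X ⟶ X') (h' : X' ⟶ X) (j : Y ⟶ Y') (j' : Y' ⟶ Y)
    (hf : f ≫ f' = 𝟙 A) (hg : g ≫ g' = 𝟙 B) (hh : h ≫ h' = 𝟙 X) (hj : j ≫ j' = 𝟙 Y) :
    M.cm A B X Y =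
      M.whom (M.whom f g) (M.whom h j) ≫ M.cm A' B' X' Y' ≫
        M.whom (M.whom f' h') (M.whom g' j') := by
  have hn := M.cm_natural f g h j
  rw [← Category.assoc, ← hn, Category.assoc, M.mer, M.mer, M.mer, hf, hh, hg, hj,
    M.whom_id, M.whom_id, M.whom_id, Category.comp_id]

lemma whom_split3 {P Q R S T : C} (x : P ⟶ Q) (y : Q ⟶ R) (z : R ⟶ S) :
    M.whom (x ≫ y ≫ z) (𝟙 T) =
      M.whom x (𝟙 T) ≫ M.whom y (𝟙 T) ≫ M.whom z (𝟙 T) := by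
  rw [M.mer', M.mer, Category.comp_id, Category.comp_id, Category.assoc]

end Lemmas4

end MedialData
namespace MedialData

section Lemmas5

variable {C : Type u} [Category.{v} C] (M : MedialData C)

set_option maxHeartbeats 1000000 in
/-- the inner composite `b→ ≫ (c ∧ 1) ≫ b←` equals `(σ⁻¹ ∧ 1) ≫ c^m_{⊤,B,X,Y} ≫ (σ ∧ 1)`. -/
lemma inner_eq (B X Y : C) :
    M.bto B X Y ≫ M.whom (M.cc B X) (𝟙 Y) ≫ M.bfrom X B Y =
      M.whom (M.σfrom B) (𝟙 (M.wedge X Y)) ≫ M.cm M.top B X Y ≫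
        M.whom (M.σto X) (𝟙 (M.wedge B Y)) := by
  simp only [bto, bfrom, cc]
  rw [M.whom_split3]
  simp only [Category.assoc]
  -- cancelling pads of the two inner `c^m`s (naturality moves)
  rw [M.cm_pad (M.σfrom B) (M.σto B) (𝟙 M.top) (𝟙 M.top) (M.δfrom X) (M.δto X)
      (𝟙 Y) (𝟙 Y) (M.σfrom_σto B) (Category.id_comp _) (M.δfrom_δto X) (Category.id_comp _),
    M.cm_pad (M.σfrom X) (M.σto X) (M.δfrom B) (M.δto B) (𝟙 M.top) (𝟙 M.top)
      (𝟙 Y) (𝟙 Y) (M.σfrom_σto X) (M.δfrom_δto B) (Category.id_comp _) (Category.id_comp _)]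
  simp only [M.mer, M.mer', M.whom_id, M.δfrom_δto, M.δto_δfrom, M.σfrom_σto, M.σto_σfrom,
    M.δfrom_δto', M.δto_δfrom', M.σfrom_σto', M.σto_σfrom', M.δfrom_σto_top, M.σfrom_δto_top,
    M.δfrom_σto_top', M.σfrom_δto_top', Category.id_comp, Category.comp_id, Category.assoc]
  -- pad the outer `c^m`s to make the (ψc^m) redex
  rw [M.cm_pad (𝟙 (M.wedge M.top B)) (𝟙 _) (M.δfrom M.top) (M.δto M.top)
      (𝟙 (M.wedge X M.top)) (𝟙 _) (M.σfrom Y) (M.σto Y)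
      (Category.id_comp _) (M.δfrom_δto M.top) (Category.id_comp _) (M.σfrom_σto Y),
    M.cm_pad (𝟙 (M.wedge M.top X)) (𝟙 _) (𝟙 (M.wedge B M.top)) (𝟙 _)
      (M.δfrom M.top) (M.δto M.top) (M.σfrom Y) (M.σto Y)
      (Category.id_comp _) (Category.id_comp _) (M.δfrom_δto M.top) (M.σfrom_σto Y)]
  simp only [M.mer, M.mer', M.whom_id, M.δfrom_δto, M.δto_δfrom, M.σfrom_σto, M.σto_σfrom,
    M.δfrom_δto', M.δto_δfrom', M.σfrom_σto', M.σto_σfrom', M.δfrom_σto_top, M.σfrom_δto_top,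
    M.δfrom_σto_top', M.σfrom_δto_top', Category.id_comp, Category.comp_id, Category.assoc]
  rw [show (𝟙 (M.wedge (M.wedge M.top M.top) (M.wedge M.top Y))) = M.cm M.top M.top M.top Y
      from (M.cm_TTTA Y).symm,
    reassoc_of% (M.psi_cm M.top B M.top M.top X M.top M.top Y)]
  rw [M.cm_Gid X Y, M.cm_Gid B Y, M.cm_TMT B M.top, M.cm_TT X M.top]
  -- strip the remaining big `c^m` back to `c^m_{⊤,B,X,Y}`
  rw [M.cm_pad (M.σto M.top) (M.σfrom M.top) (M.δto B) (M.δfrom B) (M.δto X) (M.δfrom X)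
      (M.σto Y) (M.σfrom Y) (M.σto_σfrom M.top) (M.δto_δfrom B) (M.δto_δfrom X) (M.σto_σfrom Y)]
  simp only [M.mer, M.mer', M.whom_id, M.δfrom_δto, M.δto_δfrom, M.σfrom_σto, M.σto_σfrom,
    M.δfrom_δto', M.δto_δfrom', M.σfrom_σto', M.σto_σfrom', M.δfrom_σto_top, M.σfrom_δto_top,
    M.δfrom_σto_top', M.σfrom_δto_top', Category.id_comp, Category.comp_id, Category.assoc]
  rw [← M.σfrom_natural, M.σto_natural']
  simp only [M.δfrom_δto', M.δfrom_δto, Category.comp_id]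

end Lemmas5

end MedialData
namespace MedialData

section Lemmas6

variable {C : Type u} [Category.{v} C] (M : MedialData C)

lemma whom_split3r {P Q R S T : C} (x : P ⟶ Q) (y : Q ⟶ R) (z : R ⟶ S) :
    M.whom (𝟙 T) (x ≫ y ≫ z) =
      M.whom (𝟙 T) x ≫ M.whom (𝟙 T) y ≫ M.whom (𝟙 T) z := by
  rw [M.mer', M.mer, Category.comp_id, Category.comp_id, Category.assoc]

end Lemmas6

end MedialData

/-- The equation (c^mbc): medial commutativity is definable from associativity
and commutativity. -/
theorem cm_eq_of_assoc_comm (M : MedialData C) (A B X Y : C) :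
    M.cm A B X Y =
      M.bfrom A B (M.wedge X Y) ≫
        M.whom (𝟙 A) (M.bto B X Y ≫ M.whom (M.cc B X) (𝟙 Y) ≫ M.bfrom X B Y) ≫
        M.bto A X (M.wedge B Y) := by
  rw [M.inner_eq, M.whom_split3r]
  simp only [MedialData.bto, MedialData.bfrom]
  simp only [Category.assoc]
  rw [M.cm_pad (M.δfrom A) (M.δto A) (M.σfrom B) (M.σto B) (M.δfrom M.top) (M.δto M.top)
      (𝟙 (M.wedge X Y)) (𝟙 _) (M.δfrom_δto A) (M.σfrom_σto B) (M.δfrom_δto M.top)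
      (Category.id_comp _),
    M.cm_pad (M.δfrom A) (M.δto A) (M.δfrom M.top) (M.δto M.top) (M.σfrom X) (M.σto X)
      (𝟙 (M.wedge B Y)) (𝟙 _) (M.δfrom_δto A) (M.δfrom_δto M.top) (M.σfrom_σto X)
      (Category.id_comp _)]
  simp only [M.mer, M.mer', M.whom_id, M.δfrom_δto, M.δto_δfrom, M.σfrom_σto, M.σto_σfrom,
    M.δfrom_δto', M.δto_δfrom', M.σfrom_σto', M.σto_σfrom', M.δfrom_σto_top, M.σfrom_δto_top,
    M.δfrom_σto_top', M.σfrom_δto_top', Category.id_comp, Category.comp_id, Category.assoc]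
  rw [show (𝟙 (M.wedge (M.wedge A M.top) (M.wedge M.top M.top))) = M.cm A M.top M.top M.top
      from (M.cm_ATTT A).symm,
    reassoc_of% (M.psi_cm A M.top M.top B M.top M.top X Y)]
  rw [M.cm_Gid A B, M.cm_Gid A X, M.cm_TT X Y, M.cm_TMT B Y]
  rw [M.cm_pad (M.δto A) (M.δfrom A) (M.σto B) (M.σfrom B) (M.σto X) (M.σfrom X)
      (M.σto Y) (M.σfrom Y) (M.δto_δfrom A) (M.σto_σfrom B) (M.σto_σfrom X) (M.σto_σfrom Y)]
  simp only [M.mer, M.mer', M.whom_id, M.δfrom_δto, M.δto_δfrom, M.σfrom_σto, M.σto_σfrom,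
    M.δfrom_δto', M.δto_δfrom', M.σfrom_σto', M.σto_σfrom', M.δfrom_σto_top, M.σfrom_δto_top,
    M.δfrom_σto_top', M.σfrom_δto_top', Category.id_comp, Category.comp_id, Category.assoc]
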